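/- arXiv:1907.03101 — 2 statements merged into one kernel-verified Lean document; each statement's English description precedes it below -/
import Mathlib

section
/- Let d ≥ 1, N ≥ 1 be integers and x ∈ T^d be such that for every M ≤ N one has |S_d(x; M)| ≤ c(κ M^α + K) for some real α, κ, K ≥ 0 and absolute constant c. Then for any τ with 0 < τ = O(1) and any y ∈ T^d with 0 ≤ y_i − x_i < τ N^{−i} for i = 1, ..., d, one has |S_d(y; N) − S_d(x; N)| ≤ C τ (κ N^α + K) for an absolute constant C. -/
open Complex

/-- The Weyl sum `S_d(x; N) = ∑_{n=1}^N e(x_1 n + … + x_d n^d)`. -/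
noncomputable def weylSum (d : ℕ) (x : Fin d → ℝ) (N : ℕ) : ℂ :=
  ∑ n ∈ Finset.Icc 1 N,
    Complex.exp (2 * Real.pi * Complex.I * ∑ i : Fin d, (x i : ℂ) * (n : ℂ) ^ ((i : ℕ) + 1))

/-!
Write `y = x + h` with `h ≥ 0`. The `n`-th term of `S_d(y; ·)` is that of `S_d(x; ·)` times
`e(φ_h(n))`, where the phase `φ_h(n) = h_1 n + ⋯ + h_d n^d` vanishes at `0`, is nondecreasing
in `n`, and is at most `dτ` at `N`. Abel summation against the partial sums `S_d(x; M)`,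
`M ≤ N`, bounds the difference by `max_{M ≤ N} |S_d(x; M)| ≤ c (κ N^α + K)` times the last value
plus the total variation of `n ↦ e(φ_h(n)) - 1`; since `|e^{is} - e^{it}| ≤ |s - t|`, each of
these is at most `2π φ_h(N) ≤ 2π d τ`.
-/

open Finset

theorem norm_sum_range_smul_le_of_norm_sum_range_le {R E : Type*} [SeminormedRing R]
    [SeminormedAddCommGroup E] [Module R E] [IsBoundedSMul R E] (f : ℕ → R) (g : ℕ → E)
    (n : ℕ) (B : ℝ)
    (hB : ∀ m ≤ n, ‖∑ j ∈ range m, g j‖ ≤ B) :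
    ‖∑ i ∈ range n, f i • g i‖ ≤
      (‖f (n - 1)‖ + ∑ i ∈ range (n - 1), ‖f (i + 1) - f i‖) * B := by
  rw [sum_range_by_parts, add_mul, sum_mul]
  refine (norm_sub_le _ _).trans (add_le_add ?_ ((norm_sum_le _ _).trans (sum_le_sum ?_)))
  · exact (norm_smul_le _ _).trans (mul_le_mul_of_nonneg_left (hB n le_rfl) (norm_nonneg _))
  · intro i hi
    have : i + 1 ≤ n := by have := mem_range.mp hi; omega
    exact (norm_smul_le _ _).trans (mul_le_mul_of_nonneg_left (hB _ this) (norm_nonneg _))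

theorem norm_exp_ofReal_mul_I_sub_exp_le (s t : ℝ) :
    ‖exp (s * I) - exp (t * I)‖ ≤ |s - t| := by
  have h : exp (s * I) - exp (t * I) = exp (t * I) * (exp (I * ↑(s - t)) - 1) := by
    rw [mul_sub, ← Complex.exp_add, mul_one]
    push_cast
    ring_nf
  rw [h, norm_mul, norm_exp_ofReal_mul_I, one_mul]
  exact Real.norm_exp_I_mul_ofReal_sub_one_le

theorem norm_exp_ofReal_mul_I_sub_exp_le_of_le {s t : ℝ} (h : t ≤ s) :
    ‖exp (s * I) - exp (t * I)‖ ≤ s - t :=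
  (norm_exp_ofReal_mul_I_sub_exp_le s t).trans_eq (abs_of_nonneg (sub_nonneg.mpr h))

theorem Monotone.sum_range_norm_exp_ofReal_mul_I_sub_le {θ : ℕ → ℝ} (hθ : Monotone θ) (n : ℕ) :
    ∑ i ∈ range n, ‖exp (θ (i + 1) * I) - exp (θ i * I)‖ ≤ θ n - θ 0 := by
  rw [← sum_range_sub]
  exact sum_le_sum fun i _ ↦ norm_exp_ofReal_mul_I_sub_exp_le_of_le (hθ i.le_succ)

theorem Monotone.norm_sum_range_exp_sub_mul_le {θ : ℕ → ℝ} (hθ : Monotone θ) (g : ℕ → ℂ)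
    (n : ℕ) (B : ℝ) (hB : ∀ m ≤ n, ‖∑ j ∈ range m, g j‖ ≤ B) :
    ‖∑ i ∈ range n, (exp (θ (i + 1) * I) - exp (θ 0 * I)) * g i‖ ≤ 2 * (θ n - θ 0) * B := by
  rcases Nat.eq_zero_or_pos n with rfl | hn
  · simp
  have hB0 : 0 ≤ B := by simpa using hB 0 n.zero_le
  have hsucc : n - 1 + 1 = n := Nat.sub_add_cancel hn
  have hlast : ‖exp (θ (n - 1 + 1) * I) - exp (θ 0 * I)‖ ≤ θ n - θ 0 := by
    rw [hsucc]
    exact norm_exp_ofReal_mul_I_sub_exp_le_of_le (hθ n.zero_le)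
  have hvar := Monotone.sum_range_norm_exp_ofReal_mul_I_sub_le (θ := fun i ↦ θ (i + 1))
    (fun a b h ↦ hθ (by omega)) (n - 1)
  simp only [hsucc, zero_add] at hvar
  have habel := norm_sum_range_smul_le_of_norm_sum_range_le
    (fun i ↦ exp (θ (i + 1) * I) - exp (θ 0 * I)) g n B hB
  simp only [smul_eq_mul, sub_sub_sub_cancel_right] at habel
  refine habel.trans (mul_le_mul_of_nonneg_right ?_ hB0)
  linarith [hθ (zero_le_one' ℕ)]

def weylPhase (d : ℕ) (x : Fin d → ℝ) (n : ℕ) : ℝ :=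
  ∑ i : Fin d, x i * (n : ℝ) ^ ((i : ℕ) + 1)

section WeylPhase

variable {d : ℕ}

@[simp]
theorem weylPhase_zero (x : Fin d → ℝ) : weylPhase d x 0 = 0 := by
  simp [weylPhase]

theorem weylPhase_add (x y : Fin d → ℝ) (n : ℕ) :
    weylPhase d (x + y) n = weylPhase d x n + weylPhase d y n := by
  simp only [weylPhase, Pi.add_apply, add_mul, sum_add_distrib]

theorem monotone_weylPhase {x : Fin d → ℝ} (hx : 0 ≤ x) : Monotone (weylPhase d x) :=
  fun _ _ hmn ↦ sum_le_sum fun i _ ↦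
    mul_le_mul_of_nonneg_left (pow_le_pow_left₀ (Nat.cast_nonneg _) (Nat.cast_le.mpr hmn) _) (hx i)

theorem weylPhase_le_of_lt {x : Fin d → ℝ} {N : ℕ} (hN : 1 ≤ N) {τ : ℝ}
    (hx : ∀ i : Fin d, x i < τ / (N : ℝ) ^ ((i : ℕ) + 1)) : weylPhase d x N ≤ d * τ := by
  have hNpos : (0 : ℝ) < N := by exact_mod_cast hN
  calc weylPhase d x N ≤ ∑ _i : Fin d, τ :=
        sum_le_sum fun i _ ↦ ((lt_div_iff₀ (pow_pos hNpos _)).mp (hx i)).le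
    _ = d * τ := by simp

theorem weylSum_eq_sum_range (x : Fin d → ℝ) (N : ℕ) :
    weylSum d x N = ∑ i ∈ range N, exp (↑(2 * Real.pi * weylPhase d x (i + 1)) * I) := by
  rw [weylSum, ← Ico_add_one_right_eq_Icc, sum_Ico_eq_sum_range, Nat.add_sub_cancel]
  refine sum_congr rfl fun i _ ↦ ?_
  simp only [weylPhase, add_comm 1 i]
  push_cast
  congr 1
  ring

theorem weylSum_add_sub_weylSum (x h : Fin d → ℝ) (N : ℕ) :
    weylSum d (x + h) N - weylSum d x N = ∑ i ∈ range N,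
      (exp (↑(2 * Real.pi * weylPhase d h (i + 1)) * I) - 1) *
        exp (↑(2 * Real.pi * weylPhase d x (i + 1)) * I) := by
  simp only [weylSum_eq_sum_range, ← sum_sub_distrib, sub_one_mul, ← Complex.exp_add,
    weylPhase_add]
  refine sum_congr rfl fun i _ ↦ ?_
  push_cast
  ring_nf

end WeylPhase

theorem weyl_sum_continuity_general (d : ℕ) (hd : 1 ≤ d) (c : ℝ) (hc : 0 < c) (T : ℝ) :
    ∃ C : ℝ, 0 < C ∧ ∀ N : ℕ, 1 ≤ N → ∀ x : Fin d → ℝ, ∀ α κ K : ℝ,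
      0 ≤ α → 0 ≤ κ → 0 ≤ K →
      (∀ M : ℕ, 1 ≤ M → M ≤ N →
        ‖weylSum d x M‖ ≤ c * (κ * (M : ℝ) ^ α + K)) →
      ∀ τ : ℝ, 0 < τ → τ ≤ T → ∀ y : Fin d → ℝ,
        (∀ i : Fin d, 0 ≤ y i - x i ∧ y i - x i < τ / (N : ℝ) ^ ((i : ℕ) + 1)) →
        ‖weylSum d y N - weylSum d x N‖ ≤ C * τ * (κ * (N : ℝ) ^ α + K) := by
  refine ⟨4 * Real.pi * d * c, by positivity, ?_⟩
  intro N hN x α κ K hα hκ hK hbound τ _ _ y hy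
  obtain ⟨h, rfl⟩ : ∃ h, y = x + h := ⟨y - x, by abel⟩
  simp only [Pi.add_apply, add_sub_cancel_left] at hy
  set B := c * (κ * (N : ℝ) ^ α + K)
  have hB : 0 ≤ B := by positivity
  have hpartial : ∀ m ≤ N,
      ‖∑ j ∈ range m, exp (↑(2 * Real.pi * weylPhase d x (j + 1)) * I)‖ ≤ B := by
    intro m hm
    rw [← weylSum_eq_sum_range]
    rcases Nat.eq_zero_or_pos m with rfl | hm0
    · simpa [weylSum] using hB
    · refine (hbound m hm0 hm).trans ?_
      show _ ≤ c * (κ * (N : ℝ) ^ α + K)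
      gcongr
  have hθ : Monotone fun n ↦ 2 * Real.pi * weylPhase d h n :=
    (monotone_weylPhase fun i ↦ (hy i).1).const_mul (by positivity)
  have habel := hθ.norm_sum_range_exp_sub_mul_le _ N B hpartial
  simp only [weylPhase_zero, mul_zero, sub_zero, Complex.ofReal_zero, zero_mul,
    Complex.exp_zero] at habel
  rw [weylSum_add_sub_weylSum]
  calc _ ≤ 2 * (2 * Real.pi * weylPhase d h N) * B := habel
    _ ≤ 2 * (2 * Real.pi * (d * τ)) * B := by
      gcongr
      exact weylPhase_le_of_lt hN fun i ↦ (hy i).2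
    _ = 4 * Real.pi * d * c * τ * (κ * (N : ℝ) ^ α + K) := by ring

theorem weyl_sum_continuity (d : ℕ) (hd : 1 ≤ d) (c : ℝ) (hc : 0 < c) (T : ℝ) (hT : 0 < T) :
    ∃ C : ℝ, 0 < C ∧ ∀ N : ℕ, 1 ≤ N → ∀ x : Fin d → ℝ, ∀ α κ K : ℝ,
      0 ≤ α → 0 ≤ κ → 0 ≤ K →
      (∀ M : ℕ, 1 ≤ M → M ≤ N →
        ‖weylSum d x M‖ ≤ c * (κ * (M : ℝ) ^ α + K)) →
      ∀ τ : ℝ, 0 < τ → τ ≤ T → ∀ y : Fin d → ℝ,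
        (∀ i : Fin d, 0 ≤ y i - x i ∧ y i - x i < τ / (N : ℝ) ^ ((i : ℕ) + 1)) →
        ‖weylSum d y N - weylSum d x N‖ ≤ C * τ * (κ * (N : ℝ) ^ α + K) :=
  weyl_sum_continuity_general d hd c hc T
end

section
/- Let p be a prime and a, b integers with 1 ≤ a, b ≤ p−1 and gcd(ab, 2p) = 1. Then the set of partial sums {∑_{n=1}^{N} exp(2πi(a n + b n²)/(4p)) : N ∈ N} is a bounded subset of C; in fact every such partial sum has absolute value at most C √p log p for an absolute constant C. -/
/-!
Because `a` is odd, the summand `e((a n + b n²)/(4p))` changes sign under `n ↦ n + 2p`, so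
every block of `4p` consecutive terms cancels and each partial sum is one of length `M < 4p`.
Weyl differencing bounds its square by `2 ∑_{h<M} |∑_k e(bh/(2p))^k|`. Each inner geometric
sum is at most `|sin(π bh/(2p))|⁻¹`, and since `h ↦ bh` permutes the nonzero residues mod `2p`,
Jordan's inequality `sin(πx) ≥ 2x` turns the total into a harmonic sum of size `O(p log p)`.
-/

open Complex

namespace QuadraticWeylSum

open Finset ComplexConjugate
open scoped Real

noncomputable def e (x : ℝ) : ℂ := cexp (2 * π * I * x)

lemma e_add (x y : ℝ) : e (x + y) = e x * e y := by
  simp only [e, ← Complex.exp_add]; push_cast; ring_nf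

lemma norm_e (x : ℝ) : ‖e x‖ = 1 := by
  rw [e, show 2 * π * I * x = ((2 * π * x : ℝ) : ℂ) * I by push_cast; ring]
  exact norm_exp_ofReal_mul_I _

lemma conj_e (x : ℝ) : conj (e x) = e (-x) := by
  rw [e, e, ← Complex.exp_conj]
  simp only [map_mul, map_ofNat, conj_ofReal, conj_I]
  push_cast
  ring_nf

lemma e_pow (x : ℝ) (k : ℕ) : e x ^ k = e (k * x) := by
  rw [e, e, ← Complex.exp_nat_mul]; push_cast; ring_nf

lemma e_natCast (k : ℕ) : e k = 1 := by
  rw [e, show 2 * π * I * ((k : ℝ) : ℂ) = k * (2 * π * I) by push_cast; ring]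
  exact Complex.exp_nat_mul_two_pi_mul_I k

lemma e_half : e (1 / 2) = -1 := by
  rw [e, show 2 * π * I * ((1 / 2 : ℝ) : ℂ) = π * I by push_cast; ring, Complex.exp_pi_mul_I]

lemma norm_e_sub_one (x : ℝ) : ‖e x - 1‖ = 2 * |Real.sin (π * x)| := by
  rw [e, show 2 * π * I * x = I * ((2 * π * x : ℝ) : ℂ) by push_cast; ring,
    norm_exp_I_mul_ofReal_sub_one, norm_mul, Real.norm_two, Real.norm_eq_abs]
  ring_nf

lemma norm_geom_sum_e_le (x : ℝ) (hx : Real.sin (π * x) ≠ 0) (L : ℕ) :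
    ‖∑ k ∈ range L, e x ^ k‖ ≤ |Real.sin (π * x)|⁻¹ := by
  have hsub : ‖e x - 1‖ = 2 * |Real.sin (π * x)| := norm_e_sub_one x
  have hne : e x ≠ 1 := fun h ↦ by simp_all
  have hnum : ‖e x ^ L - 1‖ ≤ 2 := by
    calc ‖e x ^ L - 1‖ ≤ ‖e x ^ L‖ + ‖(1 : ℂ)‖ := norm_sub_le _ _
      _ = 2 := by rw [norm_pow, norm_e, one_pow, norm_one]; norm_num
  have hsin : 0 < |Real.sin (π * x)| := abs_pos.mpr hx
  calc ‖∑ k ∈ range L, e x ^ k‖ = ‖e x ^ L - 1‖ / (2 * |Real.sin (π * x)|) := by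
        rw [geom_sum_eq hne, norm_div, hsub]
    _ ≤ 2 / (2 * |Real.sin (π * x)|) := by gcongr
    _ = |Real.sin (π * x)|⁻¹ := by field_simp

lemma norm_sum_pow_le_card (z : ℂ) (hz : ‖z‖ = 1) (L : ℕ) : ‖∑ k ∈ range L, z ^ k‖ ≤ L := by
  simpa [hz] using norm_sum_le (range L) (z ^ ·)

lemma mul_conj_sum_add_sum_mul_conj (d : ℕ → ℂ) (M : ℕ) :
    (∑ n ∈ range M, d n) * conj (∑ n ∈ range M, d n) + ∑ n ∈ range M, d n * conj (d n) =
      ∑ n ∈ range M, ∑ m ∈ range (n + 1), d n * conj (d m) +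
        conj (∑ n ∈ range M, ∑ m ∈ range (n + 1), d n * conj (d m)) := by
  induction M with
  | zero => simp
  | succ M ih =>
    simp only [sum_range_succ (n := M), map_add, map_sum, map_mul, conj_conj, ← mul_sum] at ih ⊢
    linear_combination ih

lemma norm_sq_sum_le (d : ℕ → ℂ) (M : ℕ) :
    ‖∑ n ∈ range M, d n‖ ^ 2 ≤
      2 * ∑ h ∈ range M, ‖∑ k ∈ range (M - h), d (k + h) * conj (d k)‖ := by
  set D := ∑ n ∈ range M, ∑ m ∈ range (n + 1), d n * conj (d m)
  have hD : D = ∑ h ∈ range M, ∑ k ∈ range (M - h), d (k + h) * conj (d k) := by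
    rw [← sum_range_diag_flip M fun h k ↦ d (k + h) * conj (d k)]
    refine sum_congr rfl fun n _ ↦ ?_
    rw [← sum_range_reflect]
    refine sum_congr rfl fun m hm ↦ ?_
    rw [Nat.add_sub_cancel, Nat.sub_add_cancel (Nat.lt_succ_iff.mp (mem_range.mp hm))]
  have hre : ‖∑ n ∈ range M, d n‖ ^ 2 + ∑ n ∈ range M, ‖d n‖ ^ 2 = 2 * D.re := by
    have := congrArg re (mul_conj_sum_add_sum_mul_conj d M)
    simp only [mul_conj', add_re, conj_re] at this
    norm_cast at this
    linarith
  have hdiag : 0 ≤ ∑ n ∈ range M, ‖d n‖ ^ 2 := by positivity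
  calc ‖∑ n ∈ range M, d n‖ ^ 2 ≤ 2 * D.re := by linarith
    _ ≤ 2 * ‖D‖ := by gcongr; exact re_le_norm D
    _ ≤ _ := by rw [hD]; gcongr; exact norm_sum_le _ _

lemma sum_range_mod_of_antiperiodic {G : Type*} [AddCommGroup G] {f : ℕ → G} {T : ℕ}
    (hf : Function.Antiperiodic f T) (N : ℕ) :
    ∑ n ∈ range (N % (2 * T)), f n = ∑ n ∈ range N, f n := by
  have hper : Function.Periodic (fun N ↦ ∑ n ∈ range N, f n) (2 * T) := fun N ↦ by
    dsimp only
    rw [two_mul, ← add_assoc, sum_range_add, sum_range_add, add_assoc, add_eq_left]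
    simp only [add_right_comm N T, hf _, sum_neg_distrib, add_neg_cancel]
  exact hper.map_mod_nat N

lemma e_quadratic_mul_conj (α β γ : ℝ) (h k : ℕ) :
    e (α * (k + h : ℕ) ^ 2 + β * (k + h : ℕ) + γ) * conj (e (α * k ^ 2 + β * k + γ)) =
      e (α * h ^ 2 + β * h) * e (2 * α * h) ^ k := by
  rw [conj_e, ← e_add, e_pow, ← e_add]
  congr 1
  push_cast
  ring

lemma norm_sq_sum_e_quadratic_le (α β γ : ℝ) (M : ℕ) :
    ‖∑ n ∈ range M, e (α * n ^ 2 + β * n + γ)‖ ^ 2 ≤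
      2 * ∑ h ∈ range M, ‖∑ k ∈ range (M - h), e (2 * α * h) ^ k‖ := by
  refine (norm_sq_sum_le _ M).trans ?_
  gcongr with h
  simp only [e_quadratic_mul_conj, ← mul_sum, norm_mul, norm_e, one_mul, le_refl]

lemma two_mul_le_sin_pi_mul {x : ℝ} (hx0 : 0 ≤ x) (hx1 : x ≤ 1 / 2) :
    2 * x ≤ Real.sin (π * x) := by
  have h := Real.mul_le_sin (x := π * x) (by positivity) (by nlinarith [Real.pi_pos])
  rwa [← mul_assoc, div_mul_cancel₀ _ Real.pi_ne_zero] at h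

lemma inv_abs_sin_pi_mul_le {x : ℝ} (hx0 : 0 < x) (hx1 : x < 1) :
    |Real.sin (π * x)|⁻¹ ≤ (2 * x)⁻¹ + (2 * (1 - x))⁻¹ := by
  rcases le_total x (1 / 2) with hx | hx
  · have h := two_mul_le_sin_pi_mul hx0.le hx
    rw [abs_of_nonneg (by linarith)]
    calc (Real.sin (π * x))⁻¹ ≤ (2 * x)⁻¹ := inv_anti₀ (by positivity) h
      _ ≤ _ := le_add_of_nonneg_right (by simp only [inv_nonneg]; linarith)
  · have h := two_mul_le_sin_pi_mul (x := 1 - x) (by linarith) (by linarith)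
    rw [show π * (1 - x) = π - π * x by ring, Real.sin_pi_sub] at h
    rw [abs_of_nonneg (by linarith)]
    calc (Real.sin (π * x))⁻¹ ≤ (2 * (1 - x))⁻¹ := inv_anti₀ (by linarith) h
      _ ≤ _ := le_add_of_nonneg_left (by simp only [inv_nonneg]; linarith)

lemma sum_inv_abs_sin_pi_div_le (q : ℕ) :
    ∑ r ∈ Ico 1 q, |Real.sin (π * (r / q))|⁻¹ ≤ q * (1 + Real.log q) := by
  have hterm : ∀ r ∈ Ico 1 q, |Real.sin (π * (r / q))|⁻¹ ≤
      q / 2 * ((r : ℝ)⁻¹ + ((q - r : ℕ) : ℝ)⁻¹) := by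
    intro r hr
    obtain ⟨hr1, hrq⟩ := mem_Ico.mp hr
    have hr : (0 : ℝ) < r := by exact_mod_cast hr1
    have hrq' : (r : ℝ) < q := by exact_mod_cast hrq
    have hq : (0 : ℝ) < q := hr.trans hrq'
    refine (inv_abs_sin_pi_mul_le (by positivity) ((div_lt_one hq).mpr hrq')).trans_eq ?_
    rw [Nat.cast_sub hrq.le]
    field_simp
  have hreflect : ∑ r ∈ Ico 1 q, ((q - r : ℕ) : ℝ)⁻¹ = ∑ r ∈ Ico 1 q, (r : ℝ)⁻¹ := by
    rcases Nat.eq_zero_or_pos q with rfl | hq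
    · simp
    rw [sum_Ico_reflect (fun r ↦ (r : ℝ)⁻¹) 1 (Nat.le_succ q), Nat.add_sub_cancel,
      Nat.add_sub_cancel_left]
  have hharmonic : ∑ r ∈ Ico 1 q, (r : ℝ)⁻¹ ≤ 1 + Real.log q := by
    refine le_trans ?_ (harmonic_le_one_add_log q)
    rw [harmonic_eq_sum_Icc]
    push_cast
    exact sum_le_sum_of_subset_of_nonneg Ico_subset_Icc_self fun _ _ _ ↦ by positivity
  calc ∑ r ∈ Ico 1 q, |Real.sin (π * (r / q))|⁻¹
      ≤ ∑ r ∈ Ico 1 q, q / 2 * ((r : ℝ)⁻¹ + ((q - r : ℕ) : ℝ)⁻¹) := sum_le_sum hterm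
    _ = q * ∑ r ∈ Ico 1 q, (r : ℝ)⁻¹ := by
      rw [← mul_sum, sum_add_distrib, hreflect]; ring
    _ ≤ q * (1 + Real.log q) := by gcongr

lemma abs_sin_pi_mul_div_mod (m q : ℕ) :
    |Real.sin (π * (m / q))| = |Real.sin (π * ((m % q : ℕ) / q))| := by
  rcases Nat.eq_zero_or_pos q with rfl | hq
  · simp
  have hm : (m : ℝ) = (m % q : ℕ) + q * (m / q : ℕ) := by exact_mod_cast (Nat.mod_add_div m q).symm
  have hq' : (q : ℝ) ≠ 0 := by positivity
  rw [hm, show π * ((((m % q : ℕ) : ℝ) + q * (m / q : ℕ)) / q) =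
      π * ((m % q : ℕ) / q) + (m / q : ℕ) * π by field_simp,
    Real.sin_add_nat_mul_pi, abs_mul, abs_neg_one_pow, one_mul]

lemma abs_sin_pi_mul_div_pos {m q : ℕ} (hq : 0 < q) (hm : ¬q ∣ m) :
    0 < |Real.sin (π * (m / q))| := by
  rw [abs_sin_pi_mul_div_mod]
  have hr : 0 < m % q := Nat.pos_of_ne_zero fun h ↦ hm (Nat.dvd_of_mod_eq_zero h)
  have hrq : ((m % q : ℕ) : ℝ) < q := by exact_mod_cast Nat.mod_lt m hq
  refine abs_pos_of_pos (Real.sin_pos_of_pos_of_lt_pi (by positivity) ?_)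
  calc π * ((m % q : ℕ) / q) < π * 1 := by gcongr; exact (div_lt_one (by positivity)).mpr hrq
    _ = π := mul_one π

lemma not_dvd_mul_of_mem_Ico {q b h : ℕ} (hb : b.Coprime q) (hh : h ∈ Ico 1 q) : ¬q ∣ b * h :=
  fun hdvd ↦ absurd (Nat.le_of_dvd (mem_Ico.mp hh).1 (hb.symm.dvd_of_dvd_mul_left hdvd))
    (not_le.mpr (mem_Ico.mp hh).2)

lemma sum_inv_abs_sin_pi_mul_div_le_of_coprime {q b : ℕ} (hb : b.Coprime q) :
    ∑ h ∈ Ico 1 q, |Real.sin (π * ((b * h : ℕ) / q))|⁻¹ ≤ q * (1 + Real.log q) := by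
  have hmaps : ∀ h ∈ Ico 1 q, b * h % q ∈ Ico 1 q := fun h hh ↦
    mem_Ico.mpr ⟨Nat.pos_of_ne_zero fun h0 ↦
      not_dvd_mul_of_mem_Ico hb hh (Nat.dvd_of_mod_eq_zero h0),
      Nat.mod_lt _ (by have := (mem_Ico.mp hh); omega)⟩
  have hinj : Set.InjOn (fun h ↦ b * h % q) (Ico 1 q) := fun x hx y hy hxy ↦
    (Nat.ModEq.cancel_left_of_coprime (Nat.coprime_comm.mp hb) hxy).eq_of_lt_of_lt
      (mem_Ico.mp hx).2 (mem_Ico.mp hy).2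
  calc ∑ h ∈ Ico 1 q, |Real.sin (π * ((b * h : ℕ) / q))|⁻¹
      = ∑ r ∈ (Ico 1 q).image (fun h ↦ b * h % q), |Real.sin (π * (r / q))|⁻¹ := by
        rw [sum_image hinj]
        simp only [abs_sin_pi_mul_div_mod (b * _) q]
    _ ≤ ∑ r ∈ Ico 1 q, |Real.sin (π * (r / q))|⁻¹ :=
        sum_le_sum_of_subset_of_nonneg (image_subset_iff.mpr hmaps) fun _ _ _ ↦ by positivity
    _ ≤ q * (1 + Real.log q) := sum_inv_abs_sin_pi_div_le q

-- `2 * q` is the trivial bound for the geometric sums of at most `2 * q` terms occurring here.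
noncomputable def geomSumBound (q b h : ℕ) : ℝ :=
  if q ∣ b * h then 2 * q else |Real.sin (π * ((b * h : ℕ) / q))|⁻¹

lemma norm_geom_sum_e_le_geomSumBound {q L : ℕ} (b h : ℕ) (hq : 0 < q) (hL : L ≤ 2 * q) :
    ‖∑ k ∈ range L, e ((b * h : ℕ) / q) ^ k‖ ≤ geomSumBound q b h := by
  unfold geomSumBound
  split_ifs with hdvd
  · exact (norm_sum_pow_le_card _ (norm_e _) L).trans (by exact_mod_cast hL)
  · exact norm_geom_sum_e_le _ (abs_pos.mp (abs_sin_pi_mul_div_pos hq hdvd)) L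

lemma geomSumBound_add_left (q b h : ℕ) : geomSumBound q b (q + h) = geomSumBound q b h := by
  have hmod : b * (q + h) % q = b * h % q := by
    rw [show b * (q + h) = b * h + q * b by ring, Nat.add_mul_mod_self_left]
  unfold geomSumBound
  simp only [abs_sin_pi_mul_div_mod (b * (q + h)), abs_sin_pi_mul_div_mod (b * h),
    Nat.dvd_iff_mod_eq_zero, hmod]

lemma sum_geomSumBound_le {q b : ℕ} (hq : 0 < q) (hb : b.Coprime q) :
    ∑ h ∈ range (2 * q), geomSumBound q b h ≤ 2 * q * (3 + Real.log q) := by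
  have hzero : geomSumBound q b 0 = 2 * q := by simp [geomSumBound]
  have hcoprime : ∀ h ∈ Ico 1 q,
      geomSumBound q b h = |Real.sin (π * ((b * h : ℕ) / q))|⁻¹ := fun h hh ↦
    if_neg (not_dvd_mul_of_mem_Ico hb hh)
  calc ∑ h ∈ range (2 * q), geomSumBound q b h = 2 * ∑ h ∈ range q, geomSumBound q b h := by
        simp only [two_mul q, sum_range_add, geomSumBound_add_left]; ring
    _ = 2 * (2 * q + ∑ h ∈ Ico 1 q, |Real.sin (π * ((b * h : ℕ) / q))|⁻¹) := by
        rw [range_eq_Ico, sum_eq_sum_Ico_succ_bot hq, hzero, sum_congr rfl hcoprime]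
    _ ≤ 2 * (2 * q + q * (1 + Real.log q)) := by grw [sum_inv_abs_sin_pi_mul_div_le_of_coprime hb]
    _ = 2 * q * (3 + Real.log q) := by ring

lemma norm_sq_sum_e_quadratic_le_of_coprime {q b M : ℕ} (hq : 0 < q) (hb : b.Coprime q)
    (hM : M ≤ 2 * q) {α : ℝ} (hα : 2 * α = b / q) (β γ : ℝ) :
    ‖∑ n ∈ range M, e (α * n ^ 2 + β * n + γ)‖ ^ 2 ≤ 4 * q * (3 + Real.log q) := by
  have hratio : ∀ h : ℕ, e (2 * α * h) = e ((b * h : ℕ) / q) := fun h ↦ by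
    rw [hα]; push_cast; ring_nf
  calc ‖∑ n ∈ range M, e (α * n ^ 2 + β * n + γ)‖ ^ 2
      ≤ 2 * ∑ h ∈ range M, ‖∑ k ∈ range (M - h), e (2 * α * h) ^ k‖ :=
        norm_sq_sum_e_quadratic_le α β γ M
    _ ≤ 2 * ∑ h ∈ range (2 * q), geomSumBound q b h := by
        simp only [hratio]
        gcongr 2 * ?_
        refine (sum_le_sum fun h _ ↦ norm_geom_sum_e_le_geomSumBound b h hq (by omega)).trans ?_
        exact sum_le_sum_of_subset_of_nonneg (range_subset_range.mpr hM) fun h _ _ ↦ by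
          unfold geomSumBound; split_ifs <;> positivity
    _ ≤ 4 * q * (3 + Real.log q) := by linarith [sum_geomSumBound_le hq hb]

lemma sum_Icc_exp_eq_sum_range_e (p a b N : ℕ) :
    ∑ n ∈ Icc 1 N, cexp (2 * π * I * ((a : ℂ) * n + b * n ^ 2) / (4 * p)) =
      ∑ n ∈ range N, e (b / (4 * p) * n ^ 2 + (a + 2 * b) / (4 * p) * n + (a + b) / (4 * p)) := by
  rw [← Ico_add_one_right_eq_Icc, sum_Ico_eq_sum_range, Nat.add_sub_cancel]
  refine sum_congr rfl fun n _ ↦ ?_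
  rw [e]
  congr 1
  push_cast
  ring

lemma antiperiodic_e_quadratic {p a : ℕ} (hp : p ≠ 0) (ha : Odd a) (b : ℕ) :
    Function.Antiperiodic
      (fun n : ℕ ↦ e (b / (4 * p) * n ^ 2 + (a + 2 * b) / (4 * p) * n + (a + b) / (4 * p)))
      (2 * p) := fun n ↦ by
  obtain ⟨j, rfl⟩ := ha
  dsimp only
  rw [show (b / (4 * p) * ((n + 2 * p : ℕ) : ℝ) ^ 2 + ((2 * j + 1 : ℕ) + 2 * b) / (4 * p) *
      ((n + 2 * p : ℕ) : ℝ) + ((2 * j + 1 : ℕ) + b) / (4 * p) : ℝ) =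
      b / (4 * p) * n ^ 2 + ((2 * j + 1 : ℕ) + 2 * b) / (4 * p) * n +
        ((2 * j + 1 : ℕ) + b) / (4 * p) + ((b * n + b * p + b + j : ℕ) : ℝ) + 1 / 2 by
      push_cast; field_simp; ring,
    e_add, e_add, e_natCast, e_half]
  ring

lemma eight_mul_three_add_log_le {p : ℝ} (hp : 2 ≤ p) :
    8 * p * (3 + Real.log (2 * p)) ≤ (12 * √p * Real.log p) ^ 2 := by
  have hlog2 : 0.69 < Real.log 2 := Real.log_two_gt_d9.trans' (by norm_num)
  have hlogp : Real.log 2 ≤ Real.log p := Real.log_le_log (by norm_num) hp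
  have hL : 3 + Real.log 2 + Real.log p ≤ 18 * Real.log p ^ 2 := by
    nlinarith [mul_self_le_mul_self (by norm_num : (0 : ℝ) ≤ 0.69) (hlog2.le.trans hlogp)]
  rw [Real.log_mul (by norm_num) (by linarith), mul_pow, mul_pow, Real.sq_sqrt (by linarith)]
  nlinarith

end QuadraticWeylSum

open QuadraticWeylSum in
theorem partial_sums_mod_four_p_bounded :
    ∃ C : ℝ, 0 < C ∧ ∀ p : ℕ, p.Prime → ∀ a b : ℕ,
      1 ≤ a → a ≤ p - 1 → 1 ≤ b → b ≤ p - 1 → Nat.gcd (a * b) (2 * p) = 1 →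
      ∀ N : ℕ,
        ‖∑ n ∈ Finset.Icc 1 N,
          Complex.exp (2 * Real.pi * Complex.I *
            ((a : ℂ) * (n : ℂ) + (b : ℂ) * (n : ℂ) ^ 2) / (4 * p))‖ ≤
          C * Real.sqrt p * Real.log p := by
  refine ⟨12, by norm_num, fun p hp a b _ _ _ _ hab N ↦ ?_⟩
  have ha : Odd a := ((Nat.Coprime.coprime_dvd_left (dvd_mul_right a b) hab).coprime_dvd_right
    (dvd_mul_right 2 p)).odd_of_right
  have hb : b.Coprime (2 * p) := Nat.Coprime.coprime_dvd_left (dvd_mul_left b a) hab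
  have hp2 : (2 : ℝ) ≤ p := by exact_mod_cast hp.two_le
  rw [sum_Icc_exp_eq_sum_range_e, ← sum_range_mod_of_antiperiodic
    (antiperiodic_e_quadratic hp.ne_zero ha b)]
  have hsq := norm_sq_sum_e_quadratic_le_of_coprime (by have := hp.pos; omega) hb
    (Nat.mod_lt N (by have := hp.pos; omega)).le (α := b / (4 * p)) (by push_cast; ring)
    ((a + 2 * b) / (4 * p)) ((a + b) / (4 * p))
  push_cast at hsq
  refine le_of_sq_le_sq ?_ (by positivity)
  linarith [eight_mul_three_add_log_le hp2]
end
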